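/- Scaled counterfactual invariance: if the input coordinate j is rescaled by a factor λ > 0 (i.e., z_j ↦ λz_j, (μ_c)_j ↦ λ(μ_c)_j, and Σ_c ↦ D_λΣ_cD_λ where D_λ is the diagonal matrix with λ in position j and 1 elsewhere), then the counterfactual ε*_j rescales to λε*_j, while the scaled counterfactual ε*_j / √([Σ_{c*}]_{jj}) is invariant. -/

import Mathlib

open Matrix

/-- Multivariate Gaussian density N(z | μ, S) on ℝᴺ. -/
noncomputable def gaussianPDF {N : ℕ} (μ : Fin N → ℝ) (S : Matrix (Fin N) (Fin N) ℝ)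
    (z : Fin N → ℝ) : ℝ :=
  (2 * Real.pi) ^ (-(N : ℝ) / 2) * S.det ^ (-(1 : ℝ) / 2) *
    Real.exp (-(1 / 2) * ((z - μ) ⬝ᵥ S⁻¹.mulVec (z - μ)))

/-- Set of perturbations of coordinate `j` that flip a binary QDA prediction from
class 1 (predicted at `z`) to class 2. -/
noncomputable def flipSet {N : ℕ} (μ₁ μ₂ : Fin N → ℝ) (S₁ S₂ : Matrix (Fin N) (Fin N) ℝ)
    (p₁ p₂ : ℝ) (z : Fin N → ℝ) (j : Fin N) : Set ℝ :=
  {t : ℝ | p₁ * gaussianPDF μ₁ S₁ (z + t • (Pi.single j 1 : Fin N → ℝ)) ≤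
      p₂ * gaussianPDF μ₂ S₂ (z + t • (Pi.single j 1 : Fin N → ℝ))}

/-!
Rescaling coordinate `j` is the linear change of variables `D = D_λ`, under which every Gaussian
density is multiplied by the same factor `|det D|⁻¹ = λ⁻¹`; hence the QDA decision regions are
transported by `D`, which on the line `z + t e_j` is `t ↦ λ t`. Minimality of `|ε|` is preserved
because `t ↦ λ t` is monotone, and `(D Σ D)_jj = λ² Σ_jj` makes `ε / √Σ_jj` invariant.
-/

theorem Matrix.mulVec_dotProduct_inv_mulVec_congr {n α : Type*} [Fintype n] [DecidableEq n]
    [CommRing α] (D S : Matrix n n α) (hD : IsUnit D.det) (v : n → α) :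
    D *ᵥ v ⬝ᵥ (D * S * Dᵀ)⁻¹ *ᵥ (D *ᵥ v) = v ⬝ᵥ S⁻¹ *ᵥ v := by
  have hDv : D⁻¹ *ᵥ (D *ᵥ v) = v := by
    rw [mulVec_mulVec, nonsing_inv_mul D hD, one_mulVec]
  rw [mul_inv_rev, mul_inv_rev, ← transpose_nonsing_inv, ← mulVec_mulVec, ← mulVec_mulVec,
    hDv, dotProduct_mulVec, vecMul_transpose, hDv]

theorem gaussianPDF_congr {N : ℕ} (μ x : Fin N → ℝ) (S D : Matrix (Fin N) (Fin N) ℝ)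
    (hS : 0 ≤ S.det) (hD : IsUnit D.det) :
    gaussianPDF (D *ᵥ μ) (D * S * Dᵀ) (D *ᵥ x) = |D.det|⁻¹ * gaussianPDF μ S x := by
  have hdet : (D * S * Dᵀ).det ^ (-(1 : ℝ) / 2) = |D.det|⁻¹ * S.det ^ (-(1 : ℝ) / 2) := by
    rw [det_mul, det_mul, det_transpose, mul_right_comm, ← sq, ← sq_abs,
      Real.mul_rpow (sq_nonneg _) hS, ← Real.rpow_natCast, ← Real.rpow_mul (abs_nonneg _)]
    norm_num [Real.rpow_neg_one]
  rw [gaussianPDF, gaussianPDF, ← mulVec_sub, mulVec_dotProduct_inv_mulVec_congr D S hD, hdet]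
  ring

/-- The matrix `D_λ` rescaling coordinate `j` by `l`. -/
def coordScaling {N : ℕ} (j : Fin N) (l : ℝ) : Matrix (Fin N) (Fin N) ℝ :=
  diagonal fun k => if k = j then l else 1

section coordScaling

variable {N : ℕ} (j : Fin N) (l : ℝ)

theorem det_coordScaling : (coordScaling j l).det = l := by
  simp [coordScaling, det_diagonal, Finset.prod_ite_eq']

theorem transpose_coordScaling : (coordScaling j l)ᵀ = coordScaling j l :=
  diagonal_transpose _

theorem coordScaling_mulVec_single : coordScaling j l *ᵥ Pi.single j 1 = l • Pi.single j 1 := by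
  ext k
  by_cases h : k = j <;> simp [coordScaling, mulVec_diagonal, h]

theorem coordScaling_mul_mul_apply_self (S : Matrix (Fin N) (Fin N) ℝ) :
    (coordScaling j l * S * coordScaling j l) j j = l * l * S j j := by
  simp only [coordScaling, mul_diagonal, diagonal_mul, if_pos]
  ring

theorem gaussianPDF_coordScaling (hl : 0 < l) (μ x : Fin N → ℝ)
    (S : Matrix (Fin N) (Fin N) ℝ) (hS : 0 ≤ S.det) :
    gaussianPDF (coordScaling j l *ᵥ μ) (coordScaling j l * S * coordScaling j l)
      (coordScaling j l *ᵥ x) = l⁻¹ * gaussianPDF μ S x := by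
  have hD : IsUnit (coordScaling j l).det := by
    rw [det_coordScaling]; exact hl.ne'.isUnit
  conv_lhs => enter [2, 2]; rw [← transpose_coordScaling]
  rw [gaussianPDF_congr μ x S _ hS hD, det_coordScaling, abs_of_pos hl]

theorem coordScaling_mul_mem_flipSet_iff (hl : 0 < l) (μ₁ μ₂ z : Fin N → ℝ)
    (S₁ S₂ : Matrix (Fin N) (Fin N) ℝ) (hS₁ : 0 ≤ S₁.det) (hS₂ : 0 ≤ S₂.det) (p₁ p₂ t : ℝ) :
    l * t ∈ flipSet (coordScaling j l *ᵥ μ₁) (coordScaling j l *ᵥ μ₂)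
        (coordScaling j l * S₁ * coordScaling j l) (coordScaling j l * S₂ * coordScaling j l)
        p₁ p₂ (coordScaling j l *ᵥ z) j ↔
      t ∈ flipSet μ₁ μ₂ S₁ S₂ p₁ p₂ z j := by
  have hshift : coordScaling j l *ᵥ z + (l * t) • Pi.single j 1 =
      coordScaling j l *ᵥ (z + t • Pi.single j 1) := by
    rw [mulVec_add, mulVec_smul, coordScaling_mulVec_single, smul_smul, mul_comm]
  simp only [flipSet, Set.mem_ofPred_eq, hshift, gaussianPDF_coordScaling j l hl _ _ _ hS₁,
    gaussianPDF_coordScaling j l hl _ _ _ hS₂, mul_left_comm _ l⁻¹]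
  exact mul_le_mul_iff_of_pos_left (inv_pos.2 hl)

end coordScaling

theorem IsLeast.abs_image_of_mul_mem_iff {A B : Set ℝ} {l ε : ℝ} (hl : 0 < l)
    (hAB : ∀ t, l * t ∈ B ↔ t ∈ A) (h : IsLeast (abs '' A) |ε|) :
    IsLeast (abs '' B) |l * ε| := by
  have hB : B = (l * ·) '' A := by
    rw [show A = (l * ·) ⁻¹' B from Set.ext fun t => (hAB t).symm,
      Set.image_preimage_eq B (mul_left_surjective₀ hl.ne')]
  have habs : abs '' B = (l * ·) '' (abs '' A) := by
    simp only [hB, Set.image_image, abs_mul, abs_of_pos hl]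
  rw [habs, abs_mul, abs_of_pos hl]
  exact (monotone_mul_left_of_nonneg hl.le).map_isLeast h

theorem scaled_counterfactual_invariance_general {N : ℕ} (μ₁ μ₂ z : Fin N → ℝ)
    (S₁ S₂ : Matrix (Fin N) (Fin N) ℝ) (hS₁ : S₁.PosDef) (hS₂ : S₂.PosDef)
    (p₁ p₂ : ℝ) (j : Fin N) (l : ℝ) (hl : 0 < l)
    (ε : ℝ) (hmem : ε ∈ flipSet μ₁ μ₂ S₁ S₂ p₁ p₂ z j)
    (hmin : IsLeast (abs '' flipSet μ₁ μ₂ S₁ S₂ p₁ p₂ z j) |ε|) :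
    let D : Matrix (Fin N) (Fin N) ℝ := Matrix.diagonal (fun k => if k = j then l else 1)
    -- the decision regions transform by D: the flip set rescales by l
    (∀ t : ℝ, t ∈ flipSet μ₁ μ₂ S₁ S₂ p₁ p₂ z j ↔
        l * t ∈ flipSet (D.mulVec μ₁) (D.mulVec μ₂) (D * S₁ * D) (D * S₂ * D)
          p₁ p₂ (D.mulVec z) j) ∧
    -- hence the counterfactual rescales to l * ε
    (l * ε ∈ flipSet (D.mulVec μ₁) (D.mulVec μ₂) (D * S₁ * D) (D * S₂ * D)
        p₁ p₂ (D.mulVec z) j ∧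
      IsLeast (abs '' flipSet (D.mulVec μ₁) (D.mulVec μ₂) (D * S₁ * D) (D * S₂ * D)
        p₁ p₂ (D.mulVec z) j) |l * ε|) ∧
    -- while the scaled counterfactual is invariant
    (l * ε) / Real.sqrt ((D * S₁ * D) j j) = ε / Real.sqrt (S₁ j j) := by
  intro D
  have hflip := coordScaling_mul_mem_flipSet_iff j l hl μ₁ μ₂ z S₁ S₂
    hS₁.det_pos.le hS₂.det_pos.le p₁ p₂
  refine ⟨fun t => (hflip t).symm, ⟨(hflip ε).2 hmem, hmin.abs_image_of_mul_mem_iff hl hflip⟩, ?_⟩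
  rw [show (D * S₁ * D) j j = l * l * S₁ j j from coordScaling_mul_mul_apply_self j l S₁,
    Real.sqrt_mul (mul_self_nonneg l), Real.sqrt_mul_self hl.le, mul_div_mul_left ε _ hl.ne']

theorem scaled_counterfactual_invariance {N : ℕ} (μ₁ μ₂ z : Fin N → ℝ)
    (S₁ S₂ : Matrix (Fin N) (Fin N) ℝ) (hS₁ : S₁.PosDef) (hS₂ : S₂.PosDef)
    (p₁ p₂ : ℝ) (hp₁ : 0 < p₁) (hp₂ : 0 < p₂) (j : Fin N) (l : ℝ) (hl : 0 < l)
    (ε : ℝ) (hmem : ε ∈ flipSet μ₁ μ₂ S₁ S₂ p₁ p₂ z j)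
    (hmin : IsLeast (abs '' flipSet μ₁ μ₂ S₁ S₂ p₁ p₂ z j) |ε|) :
    let D : Matrix (Fin N) (Fin N) ℝ := Matrix.diagonal (fun k => if k = j then l else 1)
    -- the decision regions transform by D: the flip set rescales by l
    (∀ t : ℝ, t ∈ flipSet μ₁ μ₂ S₁ S₂ p₁ p₂ z j ↔
        l * t ∈ flipSet (D.mulVec μ₁) (D.mulVec μ₂) (D * S₁ * D) (D * S₂ * D)
          p₁ p₂ (D.mulVec z) j) ∧
    -- hence the counterfactual rescales to l * ε
    (l * ε ∈ flipSet (D.mulVec μ₁) (D.mulVec μ₂) (D * S₁ * D) (D * S₂ * D)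
        p₁ p₂ (D.mulVec z) j ∧
      IsLeast (abs '' flipSet (D.mulVec μ₁) (D.mulVec μ₂) (D * S₁ * D) (D * S₂ * D)
        p₁ p₂ (D.mulVec z) j) |l * ε|) ∧
    -- while the scaled counterfactual is invariant
    (l * ε) / Real.sqrt ((D * S₁ * D) j j) = ε / Real.sqrt (S₁ j j) :=
  scaled_counterfactual_invariance_general μ₁ μ₂ z S₁ S₂ hS₁ hS₂ p₁ p₂ j l hl ε hmem hmin
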